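/- Let L be a Lie algebra over k, z ∈ Z(L), and α ∈ k. Then φ: L⊗L → L⊗L, x⊗y ↦ α[x,y]⊗z + y⊗x, satisfies the braid equation φ¹²φ²³φ¹² = φ²³φ¹²φ²³, and is invertible with inverse x⊗y ↦ α z⊗[x,y] + y⊗x. -/

import Mathlib

open TensorProduct LinearMap

noncomputable section

variable {k : Type*} [Field k]

/-- `R ⊗ I` acting on the first two factors of `V ⊗ (V ⊗ V)`. -/
def leg12 {V : Type*} [AddCommGroup V] [Module k V]
    (R : V ⊗[k] V →ₗ[k] V ⊗[k] V) :
    V ⊗[k] (V ⊗[k] V) →ₗ[k] V ⊗[k] (V ⊗[k] V) :=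
  (TensorProduct.assoc k V V V).toLinearMap ∘ₗ R.rTensor V ∘ₗ
    (TensorProduct.assoc k V V V).symm.toLinearMap

/-- `I ⊗ R` acting on the last two factors. -/
def leg23 {V : Type*} [AddCommGroup V] [Module k V]
    (R : V ⊗[k] V →ₗ[k] V ⊗[k] V) :
    V ⊗[k] (V ⊗[k] V) →ₗ[k] V ⊗[k] (V ⊗[k] V) :=
  R.lTensor V

/-- `R¹³ = (I⊗τ)(R⊗I)(I⊗τ)`. -/
def leg13 {V : Type*} [AddCommGroup V] [Module k V]
    (R : V ⊗[k] V →ₗ[k] V ⊗[k] V) :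
    V ⊗[k] (V ⊗[k] V) →ₗ[k] V ⊗[k] (V ⊗[k] V) :=
  ((TensorProduct.comm k V V).toLinearMap.lTensor V) ∘ₗ leg12 R ∘ₗ
    ((TensorProduct.comm k V V).toLinearMap.lTensor V)

/-! On a pure tensor `x ⊗ y ⊗ w` both sides of the braid equation expand to
`α² [x,[y,w]] ⊗ z ⊗ z + α (w ⊗ [x,y] ⊗ z + [x,w] ⊗ y ⊗ z + [y,w] ⊗ z ⊗ x) + w ⊗ y ⊗ x`:
centrality of `z` kills every bracket with `z`, and on the left-hand side the two double brackets
`[[x,y],w] + [y,[x,w]]` combine into `[x,[y,w]]` by the Jacobi identity. In `ψ ∘ φ` and `φ ∘ ψ`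
the `α²` term is again a bracket with `z`, and the two `α` terms cancel by antisymmetry. -/

namespace LieAlgebra

variable {R L : Type*} [CommRing R] [LieRing L] [LieAlgebra R L] {z : L}

theorem lie_eq_zero_of_mem_center_right (hz : z ∈ center R L) (x : L) : ⁅x, z⁆ = 0 := hz x

theorem lie_eq_zero_of_mem_center_left (hz : z ∈ center R L) (x : L) : ⁅z, x⁆ = 0 := by
  rw [← lie_skew, hz x, neg_zero]

end LieAlgebra

section Legs

variable {V : Type*} [AddCommGroup V] [Module k V] (R : V ⊗[k] V →ₗ[k] V ⊗[k] V)

@[simp]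
theorem leg12_tmul (x y w : V) :
    leg12 R (x ⊗ₜ (y ⊗ₜ w)) = TensorProduct.assoc k V V V (R (x ⊗ₜ y) ⊗ₜ w) := by
  simp [leg12]

@[simp]
theorem leg23_tmul (x y w : V) : leg23 R (x ⊗ₜ (y ⊗ₜ w)) = x ⊗ₜ R (y ⊗ₜ w) := rfl

end Legs

section CentralTwist

open LieAlgebra

variable {L : Type*} [LieRing L] [LieAlgebra k L] {z : L} {α : k}
  {φ ψ : L ⊗[k] L →ₗ[k] L ⊗[k] L}

theorem leg12_leg23_leg12_tmul (hz : z ∈ center k L)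
    (hφ : ∀ x y : L, φ (x ⊗ₜ[k] y) = α • (⁅x, y⁆ ⊗ₜ[k] z) + y ⊗ₜ[k] x) (x y w : L) :
    (leg12 φ ∘ₗ leg23 φ ∘ₗ leg12 φ) (x ⊗ₜ (y ⊗ₜ w)) =
      α ^ 2 • (⁅x, ⁅y, w⁆⁆ ⊗ₜ (z ⊗ₜ z)) + α • (w ⊗ₜ (⁅x, y⁆ ⊗ₜ z)) +
        α • (⁅x, w⁆ ⊗ₜ (y ⊗ₜ z)) + α • (⁅y, w⁆ ⊗ₜ (z ⊗ₜ x)) + w ⊗ₜ (y ⊗ₜ x) := by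
  simp only [comp_apply, leg12_tmul, leg23_tmul, hφ, lie_eq_zero_of_mem_center_left hz,
    leibniz_lie x y w, map_add, map_smul, tmul_add, add_tmul, tmul_smul, smul_tmul, zero_tmul,
    smul_zero, zero_add, TensorProduct.assoc_tmul]
  module

theorem leg23_leg12_leg23_tmul (hz : z ∈ center k L)
    (hφ : ∀ x y : L, φ (x ⊗ₜ[k] y) = α • (⁅x, y⁆ ⊗ₜ[k] z) + y ⊗ₜ[k] x) (x y w : L) :
    (leg23 φ ∘ₗ leg12 φ ∘ₗ leg23 φ) (x ⊗ₜ (y ⊗ₜ w)) =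
      α ^ 2 • (⁅x, ⁅y, w⁆⁆ ⊗ₜ (z ⊗ₜ z)) + α • (w ⊗ₜ (⁅x, y⁆ ⊗ₜ z)) +
        α • (⁅x, w⁆ ⊗ₜ (y ⊗ₜ z)) + α • (⁅y, w⁆ ⊗ₜ (z ⊗ₜ x)) + w ⊗ₜ (y ⊗ₜ x) := by
  simp only [comp_apply, leg12_tmul, leg23_tmul, hφ, lie_eq_zero_of_mem_center_left hz,
    lie_eq_zero_of_mem_center_right hz, map_add, map_smul, tmul_add, add_tmul, tmul_smul,
    smul_tmul, zero_tmul, smul_zero, zero_add, TensorProduct.assoc_tmul]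
  module

theorem inv_comp_self_of_mem_center (hz : z ∈ center k L)
    (hφ : ∀ x y : L, φ (x ⊗ₜ[k] y) = α • (⁅x, y⁆ ⊗ₜ[k] z) + y ⊗ₜ[k] x)
    (hψ : ∀ x y : L, ψ (x ⊗ₜ[k] y) = α • (z ⊗ₜ[k] ⁅x, y⁆) + y ⊗ₜ[k] x) :
    ψ ∘ₗ φ = LinearMap.id :=
  TensorProduct.ext' fun x y => by
    simp only [comp_apply, hφ, hψ, map_add, map_smul, lie_eq_zero_of_mem_center_right hz,
      tmul_zero, smul_zero, zero_add, id_apply, ← lie_skew y x, tmul_neg]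
    module

theorem self_comp_inv_of_mem_center (hz : z ∈ center k L)
    (hφ : ∀ x y : L, φ (x ⊗ₜ[k] y) = α • (⁅x, y⁆ ⊗ₜ[k] z) + y ⊗ₜ[k] x)
    (hψ : ∀ x y : L, ψ (x ⊗ₜ[k] y) = α • (z ⊗ₜ[k] ⁅x, y⁆) + y ⊗ₜ[k] x) :
    φ ∘ₗ ψ = LinearMap.id :=
  TensorProduct.ext' fun x y => by
    simp only [comp_apply, hφ, hψ, map_add, map_smul, lie_eq_zero_of_mem_center_left hz,
      zero_tmul, smul_zero, zero_add, id_apply, ← lie_skew y x, neg_tmul]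
    module

end CentralTwist

theorem yb_operator_from_lie_algebra
    (L : Type*) [LieRing L] [LieAlgebra k L]
    (z : L) (hz : z ∈ LieAlgebra.center k L) (α : k)
    (φ ψ : L ⊗[k] L →ₗ[k] L ⊗[k] L)
    (hφ : ∀ x y : L, φ (x ⊗ₜ[k] y) = α • (⁅x, y⁆ ⊗ₜ[k] z) + y ⊗ₜ[k] x)
    (hψ : ∀ x y : L, ψ (x ⊗ₜ[k] y) = α • (z ⊗ₜ[k] ⁅x, y⁆) + y ⊗ₜ[k] x) :
    (leg12 φ ∘ₗ leg23 φ ∘ₗ leg12 φ = leg23 φ ∘ₗ leg12 φ ∘ₗ leg23 φ) ∧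
    ψ ∘ₗ φ = LinearMap.id ∧ φ ∘ₗ ψ = LinearMap.id :=
  ⟨ext_threefold' fun x y w => by
      rw [leg12_leg23_leg12_tmul hz hφ, leg23_leg12_leg23_tmul hz hφ],
    inv_comp_self_of_mem_center hz hφ hψ, self_comp_inv_of_mem_center hz hφ hψ⟩
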